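/- For an involution y in S_n, the involution length ℓ̂(y) (the common length of all involution words for y) equals (ℓ(y) + κ(y))/2, where ℓ(y) is the number of inversions of y and κ(y) is the number of two-cycles of y. -/
import Mathlib

/-- The Coxeter length of a permutation of `Fin n`, i.e. its number of inversions. -/
def ell {n : ℕ} (w : Equiv.Perm (Fin n)) : ℕ :=
  (Finset.univ.filter (fun p : Fin n × Fin n => p.1 < p.2 ∧ w p.2 < w p.1)).card

/-- The number of two-cycles of an involution `y`. -/
def kap {n : ℕ} (y : Equiv.Perm (Fin n)) : ℕ :=
  (Finset.univ.filter (fun i : Fin n => i < y i)).card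

/-- `s` is a simple transposition `(i, i+1)` of `Fin n`. -/
def IsSimple {n : ℕ} (s : Equiv.Perm (Fin n)) : Prop :=
  ∃ i : ℕ, ∃ h : i + 1 < n, s = Equiv.swap ⟨i, Nat.lt_of_succ_lt h⟩ ⟨i + 1, h⟩

/-- The Richardson–Springer operation `g ⋊ s`. -/
def smult {n : ℕ} (g s : Equiv.Perm (Fin n)) : Equiv.Perm (Fin n) :=
  if s * g = g * s then g * s else s * g * s

section Helpers

lemma swap_lt_swap {n : ℕ} {i j : Fin n} (hij : (i:ℕ)+1 = (j:ℕ)) {p q : Fin n}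
    (hpq : p < q) (hne : ¬(p = i ∧ q = j)) : Equiv.swap i j p < Equiv.swap i j q := by
  have hpq' : (p:ℕ) < (q:ℕ) := hpq
  have hne' : ¬((p:ℕ) = (i:ℕ) ∧ (q:ℕ) = (j:ℕ)) := by
    simpa [Fin.ext_iff] using hne
  rw [Fin.lt_def]
  simp only [Equiv.swap_apply_def]
  split_ifs <;> simp_all [Fin.ext_iff] <;> omega

lemma mem_erase_step {n : ℕ} {i j : Fin n} (hij : (i:ℕ)+1 = (j:ℕ)) (u : Equiv.Perm (Fin n))
    {p : Fin n × Fin n}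
    (hp : p ∈ (Finset.univ.filter
        (fun p : Fin n × Fin n => p.1 < p.2 ∧ u p.2 < u p.1)).erase (i, j)) :
    (Equiv.swap i j p.1, Equiv.swap i j p.2) ∈ (Finset.univ.filter
        (fun p : Fin n × Fin n => p.1 < p.2 ∧ (u * Equiv.swap i j) p.2 < (u * Equiv.swap i j) p.1)).erase (i, j) := by
  simp only [Finset.mem_erase, Finset.mem_filter, Finset.mem_univ, true_and] at hp ⊢
  obtain ⟨hne, h12, hinv⟩ := hp
  have hne' : ¬(p.1 = i ∧ p.2 = j) := by
    rintro ⟨h1, h2⟩; exact hne (Prod.ext h1 h2)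
  have hij' : i < j := by rw [Fin.lt_def]; omega
  refine ⟨?_, swap_lt_swap hij h12 hne', ?_⟩
  · intro h
    have h1 : Equiv.swap i j p.1 = i := congrArg Prod.fst h
    have h2 : Equiv.swap i j p.2 = j := congrArg Prod.snd h
    have e1 : p.1 = j := by
      have := congrArg (Equiv.swap i j) h1
      simpa [Equiv.swap_apply_self, Equiv.swap_apply_left] using this
    have e2 : p.2 = i := by
      have := congrArg (Equiv.swap i j) h2
      simpa [Equiv.swap_apply_self, Equiv.swap_apply_right] using this
    rw [e1, e2] at h12
    exact absurd hij' (not_lt.mpr h12.le)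
  · simpa [Equiv.Perm.mul_apply, Equiv.swap_apply_self] using hinv

lemma ell_erase_card {n : ℕ} {i j : Fin n} (hij : (i:ℕ)+1 = (j:ℕ)) (w : Equiv.Perm (Fin n)) :
    ((Finset.univ.filter
        (fun p : Fin n × Fin n => p.1 < p.2 ∧ (w * Equiv.swap i j) p.2 < (w * Equiv.swap i j) p.1)).erase (i, j)).card
    = ((Finset.univ.filter
        (fun p : Fin n × Fin n => p.1 < p.2 ∧ w p.2 < w p.1)).erase (i, j)).card := by
  have hws : (w * Equiv.swap i j) * Equiv.swap i j = w := by
    rw [mul_assoc, Equiv.swap_mul_self, mul_one]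
  refine Finset.card_bij' (fun p _ => (Equiv.swap i j p.1, Equiv.swap i j p.2))
    (fun p _ => (Equiv.swap i j p.1, Equiv.swap i j p.2)) ?_ ?_ ?_ ?_
  · intro p hp
    have := mem_erase_step hij (w * Equiv.swap i j) hp
    rwa [hws] at this
  · intro p hp
    exact mem_erase_step hij w hp
  · intro p _; simp [Equiv.swap_apply_self]
  · intro p _; simp [Equiv.swap_apply_self]

lemma ell_mul_swap_lt {n : ℕ} {i j : Fin n} (hij : (i:ℕ)+1 = (j:ℕ)) (w : Equiv.Perm (Fin n))
    (h : w i < w j) : ell (w * Equiv.swap i j) = ell w + 1 := by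
  classical
  have hij' : i < j := by rw [Fin.lt_def]; omega
  set T := Finset.univ.filter (fun p : Fin n × Fin n => p.1 < p.2 ∧ w p.2 < w p.1) with hT
  set U := Finset.univ.filter
    (fun p : Fin n × Fin n => p.1 < p.2 ∧ (w * Equiv.swap i j) p.2 < (w * Equiv.swap i j) p.1) with hU
  have heU : (i, j) ∈ U := by
    simp only [hU, Finset.mem_filter, Finset.mem_univ, true_and]
    exact ⟨hij', by simpa [Equiv.Perm.mul_apply] using h⟩
  have heT : (i, j) ∉ T := by
    simp only [hT, Finset.mem_filter, Finset.mem_univ, true_and]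
    rintro ⟨-, h2⟩; exact absurd h (not_lt.mpr h2.le)
  have h1 : (U.erase (i,j)).card + 1 = U.card := Finset.card_erase_add_one heU
  have h2 : T.erase (i,j) = T := Finset.erase_eq_of_notMem heT
  have h3 := ell_erase_card hij w
  show U.card = T.card + 1
  rw [← h1]
  rw [hU, hT] at *
  rw [h3, h2]

lemma ell_mul_swap_gt {n : ℕ} {i j : Fin n} (hij : (i:ℕ)+1 = (j:ℕ)) (w : Equiv.Perm (Fin n))
    (h : w j < w i) : ell (w * Equiv.swap i j) + 1 = ell w := by
  classical
  have hij' : i < j := by rw [Fin.lt_def]; omega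
  set T := Finset.univ.filter (fun p : Fin n × Fin n => p.1 < p.2 ∧ w p.2 < w p.1) with hT
  set U := Finset.univ.filter
    (fun p : Fin n × Fin n => p.1 < p.2 ∧ (w * Equiv.swap i j) p.2 < (w * Equiv.swap i j) p.1) with hU
  have heT : (i, j) ∈ T := by
    simp only [hT, Finset.mem_filter, Finset.mem_univ, true_and]
    exact ⟨hij', h⟩
  have heU : (i, j) ∉ U := by
    simp only [hU, Finset.mem_filter, Finset.mem_univ, true_and]
    rintro ⟨-, h2⟩
    simp only [Equiv.Perm.mul_apply, Equiv.swap_apply_left, Equiv.swap_apply_right] at h2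
    exact absurd h (not_lt.mpr h2.le)
  have h1 : (T.erase (i,j)).card + 1 = T.card := Finset.card_erase_add_one heT
  have h2 : U.erase (i,j) = U := Finset.erase_eq_of_notMem heU
  have h3 := ell_erase_card hij w
  show U.card + 1 = T.card
  rw [← h1, hU, hT] at *
  rw [← h3, h2]

lemma ell_one {n : ℕ} : ell (1 : Equiv.Perm (Fin n)) = 0 := by
  rw [ell, Finset.card_eq_zero, Finset.filter_eq_empty_iff]
  rintro p - ⟨h1, h2⟩
  simp only [Equiv.Perm.one_apply] at h2
  exact absurd h1 (not_lt.mpr h2.le)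

lemma kap_one {n : ℕ} : kap (1 : Equiv.Perm (Fin n)) = 0 := by
  rw [kap, Finset.card_eq_zero, Finset.filter_eq_empty_iff]
  intro x _
  simp

lemma ell_inv {n : ℕ} (w : Equiv.Perm (Fin n)) : ell w⁻¹ = ell w := by
  refine Finset.card_bij' (fun p _ => (w⁻¹ p.2, w⁻¹ p.1)) (fun p _ => (w p.2, w p.1)) ?_ ?_ ?_ ?_
  · intro p hp
    simp only [Finset.mem_filter, Finset.mem_univ, true_and] at hp ⊢
    exact ⟨hp.2, by simpa using hp.1⟩
  · intro p hp
    simp only [Finset.mem_filter, Finset.mem_univ, true_and] at hp ⊢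
    exact ⟨hp.2, by simpa using hp.1⟩
  · intro p _; simp
  · intro p _; simp

lemma ell_swap_mul_gt {n : ℕ} {i j : Fin n} (hij : (i:ℕ)+1 = (j:ℕ)) (w : Equiv.Perm (Fin n))
    (h : w⁻¹ j < w⁻¹ i) : ell (Equiv.swap i j * w) + 1 = ell w := by
  have hrev : (Equiv.swap i j * w)⁻¹ = w⁻¹ * Equiv.swap i j := by
    rw [mul_inv_rev, Equiv.swap_inv]
  rw [← ell_inv (Equiv.swap i j * w), hrev, ← ell_inv w]
  exact ell_mul_swap_gt hij w⁻¹ h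

lemma ell_mul_swap_le {n : ℕ} {i j : Fin n} (hij : (i:ℕ)+1 = (j:ℕ)) (w : Equiv.Perm (Fin n)) :
    ell (w * Equiv.swap i j) ≤ ell w + 1 := by
  have hij' : i ≠ j := by
    intro h; rw [h] at hij; omega
  rcases lt_trichotomy (w i) (w j) with h | h | h
  · rw [ell_mul_swap_lt hij w h]
  · exact absurd (w.injective h) hij'
  · have := ell_mul_swap_gt hij w h
    omega

lemma ell_swap_mul_le {n : ℕ} {i j : Fin n} (hij : (i:ℕ)+1 = (j:ℕ)) (w : Equiv.Perm (Fin n)) :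
    ell (Equiv.swap i j * w) ≤ ell w + 1 := by
  have hrev : (Equiv.swap i j * w)⁻¹ = w⁻¹ * Equiv.swap i j := by
    rw [mul_inv_rev, Equiv.swap_inv]
  rw [← ell_inv (Equiv.swap i j * w), hrev, ← ell_inv w]
  exact ell_mul_swap_le hij w⁻¹

lemma two_kap {n : ℕ} (y : Equiv.Perm (Fin n)) (hy : y * y = 1) :
    2 * kap y = y.support.card := by
  classical
  have hyy : ∀ x, y (y x) = x := by
    intro x
    have := congrArg (fun z : Equiv.Perm (Fin n) => z x) hy
    simpa [Equiv.Perm.mul_apply] using this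
  have hcard : (Finset.univ.filter (fun x : Fin n => x < y x)).card
      = (Finset.univ.filter (fun x : Fin n => y x < x)).card := by
    refine Finset.card_bij' (fun x _ => y x) (fun x _ => y x) ?_ ?_ ?_ ?_
    · intro x hx; simp only [Finset.mem_filter, Finset.mem_univ, true_and] at hx ⊢
      rw [hyy]; exact hx
    · intro x hx; simp only [Finset.mem_filter, Finset.mem_univ, true_and] at hx ⊢
      rw [hyy]; exact hx
    · intro x _; exact hyy x
    · intro x _; exact hyy x
  have hsupp : y.support = (Finset.univ.filter (fun x : Fin n => x < y x))
      ∪ (Finset.univ.filter (fun x : Fin n => y x < x)) := by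
    ext x
    simp only [Equiv.Perm.mem_support, Finset.mem_union, Finset.mem_filter, Finset.mem_univ,
      true_and]
    constructor
    · intro h; rcases lt_or_gt_of_ne (Ne.symm h) with h | h
      · exact Or.inl h
      · exact Or.inr h
    · rintro (h | h) <;> exact (by intro he; rw [he] at h; exact lt_irrefl _ h)
  have hdisj : Disjoint (Finset.univ.filter (fun x : Fin n => x < y x))
      (Finset.univ.filter (fun x : Fin n => y x < x)) := by
    rw [Finset.disjoint_left]
    intro x hx hx'
    simp only [Finset.mem_filter, Finset.mem_univ, true_and] at hx hx'
    exact absurd hx (not_lt.mpr hx'.le)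
  rw [hsupp, Finset.card_union_of_disjoint hdisj, kap, ← hcard]
  ring

lemma exists_descent {n : ℕ} (w : Equiv.Perm (Fin n)) (hw : w ≠ 1) :
    ∃ i : ℕ, ∃ h : i + 1 < n, w ⟨i + 1, h⟩ < w ⟨i, Nat.lt_of_succ_lt h⟩ := by
  by_contra hcon
  push_neg at hcon
  have hadj : ∀ (i : ℕ) (h : i + 1 < n), w ⟨i, Nat.lt_of_succ_lt h⟩ < w ⟨i + 1, h⟩ := by
    intro i h
    have h1 := hcon i h
    have h2 : w ⟨i, Nat.lt_of_succ_lt h⟩ ≠ w ⟨i + 1, h⟩ := by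
      intro he
      have := w.injective he
      simp [Fin.ext_iff] at this
    exact lt_of_le_of_ne h1 h2
  have key : ∀ d : ℕ, ∀ a : Fin n, ∀ h : (a:ℕ) + d + 1 < n, w a < w ⟨(a:ℕ) + d + 1, h⟩ := by
    intro d
    induction d with
    | zero =>
      intro a h
      have ha : a = ⟨(a:ℕ), Nat.lt_of_succ_lt (by simpa using h)⟩ := rfl
      calc w a = w ⟨(a:ℕ), Nat.lt_of_succ_lt (by simpa using h)⟩ := by rw [← ha]
        _ < w ⟨(a:ℕ) + 0 + 1, h⟩ := hadj (a:ℕ) (by simpa using h)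
    | succ d ih =>
      intro a h
      have hm : (a:ℕ) + d + 1 < n := by omega
      have h1 : w a < w ⟨(a:ℕ) + d + 1, hm⟩ := ih a hm
      have h2 : w ⟨(a:ℕ) + d + 1, hm⟩ < w ⟨(a:ℕ) + (d+1) + 1, h⟩ := by
        exact hadj ((a:ℕ) + d + 1) (by omega)
      exact h1.trans h2
  have hmono : StrictMono w := by
    intro a b hab
    have hab' : (a:ℕ) < (b:ℕ) := hab
    obtain ⟨d, hd⟩ : ∃ d : ℕ, (b : ℕ) = (a : ℕ) + d + 1 := ⟨(b : ℕ) - (a : ℕ) - 1, by omega⟩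
    have hb : b = ⟨(a:ℕ) + d + 1, by omega⟩ := by rw [Fin.ext_iff]; simpa using hd
    rw [hb]
    exact key d a (by omega)
  have hsurj : Function.Surjective w := w.surjective
  let e : Fin n ≃o Fin n := StrictMono.orderIsoOfSurjective w hmono hsurj
  have : e = OrderIso.refl (Fin n) := Subsingleton.elim _ _
  apply hw
  ext x
  have h2 := congrArg (fun f : Fin n ≃o Fin n => f x) this
  have h3 : e x = x := h2
  have h4 : e x = w x := rfl
  rw [h4] at h3
  simp [h3]

lemma commute_cases {n : ℕ} {i j : Fin n} (hij : i ≠ j) {y : Equiv.Perm (Fin n)}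
    (hc : Equiv.swap i j * y = y * Equiv.swap i j) :
    (y i = i ∧ y j = j) ∨ (y i = j ∧ y j = i) := by
  have hx : ∀ x, Equiv.swap i j (y x) = y (Equiv.swap i j x) := by
    intro x
    have := congrArg (fun z : Equiv.Perm (Fin n) => z x) hc
    simpa [Equiv.Perm.mul_apply] using this
  have hi := hx i
  rw [Equiv.swap_apply_left] at hi
  by_cases h1 : y i = i
  · left
    refine ⟨h1, ?_⟩
    rw [h1, Equiv.swap_apply_left] at hi
    exact hi.symm
  by_cases h2 : y i = j
  · right
    refine ⟨h2, ?_⟩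
    rw [h2, Equiv.swap_apply_right] at hi
    exact hi.symm
  · exfalso
    rw [Equiv.swap_apply_of_ne_of_ne h1 h2] at hi
    exact hij (y.injective hi)

lemma commute_of_swapped {n : ℕ} {i j : Fin n} {y : Equiv.Perm (Fin n)} (hy : y * y = 1)
    (h1 : y i = j) (h2 : y j = i) :
    Equiv.swap i j * y = y * Equiv.swap i j := by
  have hyy : ∀ x, y (y x) = x := by
    intro x
    have := congrArg (fun z : Equiv.Perm (Fin n) => z x) hy
    simpa [Equiv.Perm.mul_apply] using this
  ext x
  simp only [Equiv.Perm.mul_apply]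
  by_cases hx1 : x = i
  · subst hx1
    rw [h1, Equiv.swap_apply_left, Equiv.swap_apply_right, h2]
  by_cases hx2 : x = j
  · subst hx2
    rw [h2, Equiv.swap_apply_right, Equiv.swap_apply_left, h1]
  · have hy1 : y x ≠ i := fun he => hx2 (by
      have := congrArg y he; rw [hyy, h1] at this; exact this)
    have hy2 : y x ≠ j := fun he => hx1 (by
      have := congrArg y he; rw [hyy, h2] at this; exact this)
    rw [Equiv.swap_apply_of_ne_of_ne hx1 hx2, Equiv.swap_apply_of_ne_of_ne hy1 hy2]

lemma support_mul_swap {n : ℕ} {i j : Fin n} (hij : i ≠ j) {y : Equiv.Perm (Fin n)}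
    (hy : y * y = 1) (h1 : y i = j) (h2 : y j = i) :
    (y * Equiv.swap i j).support = y.support \ {i, j} := by
  have hyy : ∀ x, y (y x) = x := by
    intro x
    have := congrArg (fun z : Equiv.Perm (Fin n) => z x) hy
    simpa [Equiv.Perm.mul_apply] using this
  ext x
  simp only [Equiv.Perm.mem_support, Finset.mem_sdiff, Finset.mem_insert, Finset.mem_singleton,
    Equiv.Perm.mul_apply]
  by_cases hx1 : x = i
  · subst hx1
    simp [Equiv.swap_apply_left, h2]
  by_cases hx2 : x = j
  · subst hx2
    simp [Equiv.swap_apply_right, h1]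
  · rw [Equiv.swap_apply_of_ne_of_ne hx1 hx2]
    simp [hx1, hx2]

end Helpers

section Main

lemma smult_step {n : ℕ} {g s : Equiv.Perm (Fin n)} (hg : g * g = 1) (hs : IsSimple s) :
    (smult g s) * (smult g s) = 1 ∧ ell (smult g s) + kap (smult g s) ≤ ell g + kap g + 2 := by
  classical
  obtain ⟨i0, h, rfl⟩ := hs
  set i : Fin n := ⟨i0, Nat.lt_of_succ_lt h⟩ with hi
  set j : Fin n := ⟨i0 + 1, h⟩ with hj
  have hij : (i:ℕ) + 1 = (j:ℕ) := rfl
  have hijne : i ≠ j := by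
    intro he
    have : (i:ℕ) = (j:ℕ) := congrArg Fin.val he
    omega
  have hss : Equiv.swap i j * Equiv.swap i j = 1 := Equiv.swap_mul_self i j
  rw [smult]
  by_cases hc : Equiv.swap i j * g = g * Equiv.swap i j
  · rw [if_pos hc]
    have hinv : (g * Equiv.swap i j) * (g * Equiv.swap i j) = 1 := by
      calc (g * Equiv.swap i j) * (g * Equiv.swap i j)
          = g * (Equiv.swap i j * g) * Equiv.swap i j := by group
        _ = g * (g * Equiv.swap i j) * Equiv.swap i j := by rw [hc]
        _ = 1 := by
            rw [← mul_assoc, hg, one_mul, hss]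
    refine ⟨hinv, ?_⟩
    have hell : ell (g * Equiv.swap i j) ≤ ell g + 1 := ell_mul_swap_le hij g
    have hsub : (g * Equiv.swap i j).support ⊆ g.support ∪ {i, j} := by
      intro x hx
      rw [Equiv.Perm.mem_support, Equiv.Perm.mul_apply] at hx
      by_cases hx1 : x = i
      · subst hx1; simp
      by_cases hx2 : x = j
      · subst hx2; simp
      · rw [Equiv.swap_apply_of_ne_of_ne hx1 hx2] at hx
        simp [Equiv.Perm.mem_support, hx]
    have hcard : (g * Equiv.swap i j).support.card ≤ g.support.card + 2 := by
      calc (g * Equiv.swap i j).support.card ≤ (g.support ∪ {i, j}).card :=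
            Finset.card_le_card hsub
        _ ≤ g.support.card + ({i, j} : Finset (Fin n)).card := Finset.card_union_le _ _
        _ ≤ g.support.card + 2 := by
            have : ({i, j} : Finset (Fin n)).card ≤ 2 := by
              apply le_trans (Finset.card_insert_le _ _)
              simp
            omega
    have hk1 := two_kap (g * Equiv.swap i j) hinv
    have hk2 := two_kap g hg
    omega
  · rw [if_neg hc]
    have hinv : (Equiv.swap i j * g * Equiv.swap i j) * (Equiv.swap i j * g * Equiv.swap i j) = 1 := by
      calc (Equiv.swap i j * g * Equiv.swap i j) * (Equiv.swap i j * g * Equiv.swap i j)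
          = Equiv.swap i j * (g * ((Equiv.swap i j * Equiv.swap i j) * g)) * Equiv.swap i j := by
            group
        _ = 1 := by rw [hss, one_mul, hg, mul_one, hss]
    refine ⟨hinv, ?_⟩
    have hell1 : ell (g * Equiv.swap i j) ≤ ell g + 1 := ell_mul_swap_le hij g
    have hell2 : ell (Equiv.swap i j * (g * Equiv.swap i j)) ≤ ell (g * Equiv.swap i j) + 1 :=
      ell_swap_mul_le hij _
    have hassoc : Equiv.swap i j * g * Equiv.swap i j = Equiv.swap i j * (g * Equiv.swap i j) :=
      mul_assoc _ _ _
    have hconj : (Equiv.swap i j * g * Equiv.swap i j).support.card = g.support.card := by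
      have : Equiv.swap i j * g * Equiv.swap i j
          = Equiv.swap i j * g * (Equiv.swap i j)⁻¹ := by rw [Equiv.swap_inv]
      rw [this, Equiv.Perm.card_support_conj]
    have hk1 := two_kap (Equiv.swap i j * g * Equiv.swap i j) hinv
    have hk2 := two_kap g hg
    rw [hassoc] at hk1 ⊢
    rw [hassoc] at hconj
    omega

lemma exists_pred {n : ℕ} {y : Equiv.Perm (Fin n)} (hy : y * y = 1) (hne : y ≠ 1) :
    ∃ g s : Equiv.Perm (Fin n), IsSimple s ∧ g * g = 1 ∧ smult g s = y ∧
      ell g + kap g + 2 = ell y + kap y := by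
  classical
  obtain ⟨i0, h, hd⟩ := exists_descent y hne
  set i : Fin n := ⟨i0, Nat.lt_of_succ_lt h⟩ with hi
  set j : Fin n := ⟨i0 + 1, h⟩ with hj
  have hij : (i:ℕ) + 1 = (j:ℕ) := rfl
  have hijne : i ≠ j := by
    intro he
    have : (i:ℕ) = (j:ℕ) := congrArg Fin.val he
    omega
  have hijlt : i < j := by rw [Fin.lt_def]; omega
  have hss : Equiv.swap i j * Equiv.swap i j = 1 := Equiv.swap_mul_self i j
  have hd' : y j < y i := hd
  have hsimple : IsSimple (Equiv.swap i j) := ⟨i0, h, rfl⟩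
  have hyy : ∀ x, y (y x) = x := by
    intro x
    have := congrArg (fun z : Equiv.Perm (Fin n) => z x) hy
    simpa [Equiv.Perm.mul_apply] using this
  by_cases hc : Equiv.swap i j * y = y * Equiv.swap i j
  · -- commuting case: y swaps i and j
    have hcase : y i = j ∧ y j = i := by
      rcases commute_cases hijne hc with ⟨h1, h2⟩ | hgood
      · rw [h1, h2] at hd'
        exact absurd hijlt (not_lt.mpr hd'.le)
      · exact hgood
    obtain ⟨hyi, hyj⟩ := hcase
    refine ⟨y * Equiv.swap i j, Equiv.swap i j, hsimple, ?_, ?_, ?_⟩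
    · calc (y * Equiv.swap i j) * (y * Equiv.swap i j)
          = y * (Equiv.swap i j * y) * Equiv.swap i j := by group
        _ = y * (y * Equiv.swap i j) * Equiv.swap i j := by rw [hc]
        _ = 1 := by rw [← mul_assoc, hy, one_mul, hss]
    · rw [smult]
      have hc2 : Equiv.swap i j * (y * Equiv.swap i j) = (y * Equiv.swap i j) * Equiv.swap i j := by
        rw [← mul_assoc, hc]
      rw [if_pos hc2, mul_assoc, hss, mul_one]
    · have hell : ell (y * Equiv.swap i j) + 1 = ell y := ell_mul_swap_gt hij y hd'
      have hginv : (y * Equiv.swap i j) * (y * Equiv.swap i j) = 1 := by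
        calc (y * Equiv.swap i j) * (y * Equiv.swap i j)
            = y * (Equiv.swap i j * y) * Equiv.swap i j := by group
          _ = y * (y * Equiv.swap i j) * Equiv.swap i j := by rw [hc]
          _ = 1 := by rw [← mul_assoc, hy, one_mul, hss]
      have hsupp := support_mul_swap hijne hy hyi hyj
      have hij_sub : ({i, j} : Finset (Fin n)) ⊆ y.support := by
        intro x hx
        simp only [Finset.mem_insert, Finset.mem_singleton] at hx
        rcases hx with rfl | rfl
        · rw [Equiv.Perm.mem_support, hyi]; exact hijne.symm
        · rw [Equiv.Perm.mem_support, hyj]; exact hijne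
      have hcard2 : ({i, j} : Finset (Fin n)).card = 2 := by
        rw [Finset.card_insert_of_notMem (by simpa using hijne), Finset.card_singleton]
      have hcard : (y * Equiv.swap i j).support.card = y.support.card - 2 := by
        rw [hsupp, Finset.card_sdiff_of_subset hij_sub, hcard2]
      have hge : 2 ≤ y.support.card := by
        calc 2 = ({i, j} : Finset (Fin n)).card := hcard2.symm
          _ ≤ y.support.card := Finset.card_le_card hij_sub
      have hk1 := two_kap (y * Equiv.swap i j) hginv
      have hk2 := two_kap y hy
      omega
  · -- non-commuting case: g = s y s
    refine ⟨Equiv.swap i j * y * Equiv.swap i j, Equiv.swap i j, hsimple, ?_, ?_, ?_⟩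
    · calc (Equiv.swap i j * y * Equiv.swap i j) * (Equiv.swap i j * y * Equiv.swap i j)
          = Equiv.swap i j * (y * ((Equiv.swap i j * Equiv.swap i j) * y)) * Equiv.swap i j := by
            group
        _ = 1 := by rw [hss, one_mul, hy, mul_one, hss]
    · rw [smult]
      have hne2 : Equiv.swap i j * (Equiv.swap i j * y * Equiv.swap i j)
          ≠ (Equiv.swap i j * y * Equiv.swap i j) * Equiv.swap i j := by
        intro he
        apply hc
        have lhs : Equiv.swap i j * (Equiv.swap i j * y * Equiv.swap i j) = y * Equiv.swap i j := by
          rw [← mul_assoc, ← mul_assoc, hss, one_mul]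
        have rhs : (Equiv.swap i j * y * Equiv.swap i j) * Equiv.swap i j
            = Equiv.swap i j * y := by
          rw [mul_assoc, mul_assoc, hss, mul_one]
        rw [lhs, rhs] at he
        exact he.symm
      rw [if_neg hne2]
      calc Equiv.swap i j * (Equiv.swap i j * y * Equiv.swap i j) * Equiv.swap i j
          = (Equiv.swap i j * Equiv.swap i j) * y * (Equiv.swap i j * Equiv.swap i j) := by group
        _ = y := by rw [hss, one_mul, mul_one]
    · -- lengths
      have hell1 : ell (y * Equiv.swap i j) + 1 = ell y := ell_mul_swap_gt hij y hd'
      -- descent of swap * (y * swap): condition on inverse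
      have hinv_eq : (y * Equiv.swap i j)⁻¹ = Equiv.swap i j * y := by
        rw [mul_inv_rev, Equiv.swap_inv]
        congr 1
        exact inv_eq_of_mul_eq_one_right hy
      have hnsw : ¬(y j = i ∧ y i = j) := by
        rintro ⟨e2, e1⟩
        exact hc (commute_of_swapped hy e1 e2)
      have hlt2 : Equiv.swap i j (y j) < Equiv.swap i j (y i) :=
        swap_lt_swap hij hd' hnsw
      have hcond : (y * Equiv.swap i j)⁻¹ j < (y * Equiv.swap i j)⁻¹ i := by
        rw [hinv_eq]
        simpa [Equiv.Perm.mul_apply] using hlt2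
      have hell2 : ell (Equiv.swap i j * (y * Equiv.swap i j)) + 1 = ell (y * Equiv.swap i j) := by
        refine ell_swap_mul_gt hij (y * Equiv.swap i j) ?_
        exact hcond
      have hassoc : Equiv.swap i j * y * Equiv.swap i j
          = Equiv.swap i j * (y * Equiv.swap i j) := mul_assoc _ _ _
      have hginv : (Equiv.swap i j * y * Equiv.swap i j) * (Equiv.swap i j * y * Equiv.swap i j) = 1 := by
        calc (Equiv.swap i j * y * Equiv.swap i j) * (Equiv.swap i j * y * Equiv.swap i j)
            = Equiv.swap i j * (y * ((Equiv.swap i j * Equiv.swap i j) * y)) * Equiv.swap i j := by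
              group
          _ = 1 := by rw [hss, one_mul, hy, mul_one, hss]
      have hconj : (Equiv.swap i j * y * Equiv.swap i j).support.card = y.support.card := by
        have : Equiv.swap i j * y * Equiv.swap i j
            = Equiv.swap i j * y * (Equiv.swap i j)⁻¹ := by rw [Equiv.swap_inv]
        rw [this, Equiv.Perm.card_support_conj]
      have hk1 := two_kap (Equiv.swap i j * y * Equiv.swap i j) hginv
      have hk2 := two_kap y hy
      rw [hassoc] at hk1 hconj ⊢
      omega

lemma exists_list {n : ℕ} : ∀ (k : ℕ) (y : Equiv.Perm (Fin n)), y * y = 1 →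
    ell y + kap y = k →
    ∃ L : List (Equiv.Perm (Fin n)), (∀ s ∈ L, IsSimple s) ∧ L.foldl smult 1 = y ∧
      2 * L.length = k := by
  intro k
  induction k using Nat.strong_induction_on with
  | _ k ih =>
    intro y hy hk
    by_cases h1 : y = 1
    · subst h1
      refine ⟨[], by simp, by simp, ?_⟩
      rw [← hk, ell_one, kap_one]
      simp
    · obtain ⟨g, s, hs, hg, hgs, hsum⟩ := exists_pred hy h1
      have hlt : ell g + kap g < k := by omega
      obtain ⟨L, hL1, hL2, hL3⟩ := ih _ hlt g hg rfl
      refine ⟨L ++ [s], ?_, ?_, ?_⟩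
      · intro t ht
        rcases List.mem_append.mp ht with ht | ht
        · exact hL1 t ht
        · rw [List.mem_singleton.mp ht]; exact hs
      · rw [List.foldl_append, hL2]
        simpa using hgs
      · rw [List.length_append, List.length_singleton]
        omega

lemma lower_bound {n : ℕ} : ∀ L : List (Equiv.Perm (Fin n)), (∀ s ∈ L, IsSimple s) →
    (L.foldl smult 1) * (L.foldl smult 1) = 1 ∧
      ell (L.foldl smult 1) + kap (L.foldl smult 1) ≤ 2 * L.length := by
  intro L
  induction L using List.reverseRecOn with
  | nil =>
    intro _
    simp [ell_one, kap_one]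
  | append_singleton M s ih =>
    intro hL
    have hM : ∀ t ∈ M, IsSimple t := fun t ht => hL t (by simp [ht])
    obtain ⟨h1, h2⟩ := ih hM
    have hs : IsSimple s := hL s (by simp)
    rw [List.foldl_append]
    simp only [List.foldl]
    obtain ⟨ha, hb⟩ := smult_step h1 hs
    refine ⟨ha, ?_⟩
    rw [List.length_append, List.length_singleton]
    omega

end Main

/-- The involution length `ℓ̂(y)`, the minimal number of steps needed to reach the
involution `y` from the identity via the operation `⋊`, equals `(ℓ(y) + κ(y))/2`. -/
theorem stmt3 {n : ℕ} (y : Equiv.Perm (Fin n)) (hy : y * y = 1) :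
    2 * sInf {m : ℕ | ∃ L : List (Equiv.Perm (Fin n)),
        (∀ s ∈ L, IsSimple s) ∧ L.foldl smult 1 = y ∧ L.length = m}
      = ell y + kap y := by
  classical
  obtain ⟨L, hL1, hL2, hL3⟩ := exists_list (ell y + kap y) y hy rfl
  set S : Set ℕ := {m : ℕ | ∃ L : List (Equiv.Perm (Fin n)),
      (∀ s ∈ L, IsSimple s) ∧ L.foldl smult 1 = y ∧ L.length = m} with hS
  have hmem : L.length ∈ S := ⟨L, hL1, hL2, rfl⟩
  have hub : sInf S ≤ L.length := Nat.sInf_le hmem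
  have hSne : S.Nonempty := ⟨_, hmem⟩
  obtain ⟨M, hM1, hM2, hM3⟩ := Nat.sInf_mem hSne
  have hlow := (lower_bound M hM1).2
  rw [hM2, hM3] at hlow
  omega
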